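/- arXiv:1707.05661 — 2 statements merged into one kernel-verified Lean document; each statement's English description precedes it below -/
import Mathlib

section
/- Let S be an uncountable set of countable limit ordinals carrying a ladder system ⟨x_α : α ∈ S⟩. Then the Baumgartner type (S, <_lex) contains no real type: every subset T ⊆ S such that (T, <_lex) order-embeds into ℝ is countable. -/
/-!
Suppose `T ⊆ S` is uncountable and `g` embeds `(T, <lex)` into `ℝ`. Some countable `D ⊆ T` has
`g '' D` dense in `g '' T`, and `D` is bounded by some `δ < ω₁`. Uncountably many `α ∈ T` lie
above `δ`; for these let `n` be the first index with `x α n > δ`. Since `x α 0, …, x α (n - 1)`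
range over the countable set `[0, δ]`, uncountably many such `α` share `n` and this prefix.
Each `d ∈ D` compares in the same way with all of them, as its whole ladder lies below `δ`.
But for three of them with `g a < g b < g c`, density gives `d ∈ D` with `g a < g d < g c`,
so `d <lex c` while `a <lex d`.
-/

/-- The first uncountable ordinal, `ω₁`. -/
noncomputable def ω1 : Ordinal := (Cardinal.aleph 1).ord

/-- `x` is a ladder system on the set `S` of countable limit ordinals: each `α ∈ S` is a
countable limit ordinal and `x α : ℕ → Ordinal` is strictly increasing with range contained
and cofinal in `α`. -/
def IsLadderOn (S : Set Ordinal) (x : Ordinal → ℕ → Ordinal) : Prop :=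
  ∀ α ∈ S, α < ω1 ∧ Order.IsSuccLimit α ∧ StrictMono (x α) ∧ (∀ n : ℕ, x α n < α) ∧
    ∀ β < α, ∃ n : ℕ, β < x α n

/-- The lexicographic order associated to a ladder system: `α <lex β` iff at the least `n`
where `x α` and `x β` differ we have `x α n < x β n`. -/
def LexLt (x : Ordinal → ℕ → Ordinal) (α β : Ordinal) : Prop :=
  ∃ n : ℕ, (∀ m < n, x α m = x β m) ∧ x α n < x β n

open Cardinal Set

theorem exists_countable_subset_image_subset_closure {α X : Type*} [TopologicalSpace X]
    [TopologicalSpace.PseudoMetrizableSpace X] [TopologicalSpace.SeparableSpace X]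
    (g : α → X) (T : Set α) : ∃ D ⊆ T, D.Countable ∧ g '' T ⊆ closure (g '' D) := by
  obtain ⟨C, hCT, hCc, hC⟩ :=
    (TopologicalSpace.IsSeparable.of_separableSpace (g '' T)).exists_countable_dense_subset
  obtain ⟨D, hDT, hD⟩ := SurjOn.exists_bijOn_subset (f := g) (s := T) hCT
  exact ⟨D, hDT, hD.mapsTo.countable_of_injOn hD.injOn hCc, hD.image_eq ▸ hC⟩

theorem Set.MapsTo.exists_not_countable_fiber {α β : Type*} {f : α → β} {s : Set α} {t : Set β}
    (hf : MapsTo f s t) (hs : ¬ s.Countable) (ht : t.Countable) :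
    ∃ b, ¬ (s ∩ f ⁻¹' {b}).Countable := by
  by_contra! h
  exact hs <| (ht.biUnion fun b _ => h b).mono fun a ha =>
    mem_biUnion (hf ha) (show a ∈ s ∩ f ⁻¹' {f a} from ⟨ha, rfl⟩)

theorem Set.Countable.setOf_forall_mem_list {α : Type*} {s : Set α} (hs : s.Countable) :
    {l : List α | ∀ a ∈ l, a ∈ s}.Countable := by
  have := hs.to_subtype
  exact range_list_map_coe s ▸ countable_range _

theorem Set.Infinite.exists_lt_lt {α : Type*} [LinearOrder α] {s : Set α} (hs : s.Infinite) :
    ∃ a ∈ s, ∃ b ∈ s, ∃ c ∈ s, a < b ∧ b < c := by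
  obtain ⟨t, hts, ht⟩ := hs.exists_subset_card_eq 3
  have mem (i : Fin 3) : t.orderEmbOfFin ht i ∈ s := hts (t.orderEmbOfFin_mem ht i)
  exact ⟨_, mem 0, _, mem 1, _, mem 2, by simp, by simp⟩

theorem countable_Iic_of_lt_ω1 {δ : Ordinal} (h : δ < ω1) : (Iic δ).Countable := by
  rw [← Iio_insert, countable_insert, ← le_aleph0_iff_set_countable, mk_Iio_ordinal,
    lift_le_aleph0, ← lt_aleph_one_iff]
  exact lt_ord.1 h

theorem Set.Countable.exists_mem_upperBounds_lt_ω1 {s : Set Ordinal} (hs : s.Countable)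
    (h : ∀ a ∈ s, a < ω1) : ∃ δ < ω1, δ ∈ upperBounds s := by
  have := hs.to_subtype
  refine ⟨⨆ a : s, (a : Ordinal), ?_, fun a ha => Ordinal.le_iSup (Subtype.val : s → _) ⟨a, ha⟩⟩
  rw [ω1, ord_aleph] at h ⊢
  exact Ordinal.iSup_lt_omega_one fun a => h a a.2

theorem LexLt.of_agree_below {x : Ordinal → ℕ → Ordinal} {d α β δ : Ordinal} {n : ℕ}
    (hd : ∀ m, x d m < δ) (hα : δ ≤ x α n) (hβ : δ ≤ x β n)
    (hαβ : ∀ m < n, x α m = x β m) (h : LexLt x d α) : LexLt x d β := by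
  obtain ⟨k, hagree, hlt⟩ := h
  have hkn : k ≤ n := by
    by_contra! hnk
    exact (hd n).not_ge (hagree n hnk ▸ hα)
  refine ⟨k, fun m hm => (hagree m hm).trans (hαβ m (hm.trans_le hkn)), ?_⟩
  rcases hkn.lt_or_eq with hk | rfl
  · exact hαβ k hk ▸ hlt
  · exact (hd k).trans_le hβ

-- `LexLt x α β` unfolds to `toLex (x α) < toLex (x β)` in the linear order `Lex (ℕ → Ordinal)`.
theorem lexLt_or_lexLt_of_ne {x : Ordinal → ℕ → Ordinal} {α β : Ordinal} (h : x α ≠ x β) :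
    LexLt x α β ∨ LexLt x β α :=
  lt_or_gt_of_ne (a := toLex (x α)) (b := toLex (x β)) h

theorem IsLadderOn.injOn {S : Set Ordinal} {x : Ordinal → ℕ → Ordinal} (hx : IsLadderOn S x) :
    InjOn x S := by
  intro α hα β hβ h
  by_contra hne
  wlog hlt : α < β generalizing α β
  · exact this hβ hα h.symm (Ne.symm hne) ((Ne.lt_or_gt hne).resolve_left hlt)
  obtain ⟨n, hn⟩ := (hx β hβ).2.2.2.2 α hlt
  have hβn : x β n < α := congrFun h n ▸ (hx α hα).2.2.2.1 n
  exact lt_asymm hn hβn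

theorem IsLadderOn.injOn_of_lexLt_iff {Y : Type*} [Preorder Y] {S T : Set Ordinal}
    {x : Ordinal → ℕ → Ordinal} {g : Ordinal → Y} (hx : IsLadderOn S x) (hTS : T ⊆ S)
    (hg : ∀ α ∈ T, ∀ β ∈ T, (LexLt x α β ↔ g α < g β)) : InjOn g T := by
  intro α hα β hβ h
  by_contra hne
  rcases lexLt_or_lexLt_of_ne (hx.injOn.ne (hTS hα) (hTS hβ) hne) with hlt | hlt
  · exact ((hg α hα β hβ).1 hlt).ne h
  · exact ((hg β hβ α hα).1 hlt).ne h.symm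

-- `0` when no term of `x α` exceeds `δ`.
noncomputable def ladderLevel (x : Ordinal → ℕ → Ordinal) (δ α : Ordinal) : ℕ :=
  sInf {n | δ < x α n}

noncomputable def ladderPrefix (x : Ordinal → ℕ → Ordinal) (δ α : Ordinal) : List Ordinal :=
  (List.range (ladderLevel x δ α)).map (x α)

section ladderPrefix

variable {S : Set Ordinal} {x : Ordinal → ℕ → Ordinal} {δ α β : Ordinal}

theorem IsLadderOn.lt_apply_ladderLevel (hx : IsLadderOn S x) (hα : α ∈ S) (hδα : δ < α) :
    δ < x α (ladderLevel x δ α) :=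
  Nat.sInf_mem ((hx α hα).2.2.2.2 δ hδα)

theorem le_of_mem_ladderPrefix {o : Ordinal} (h : o ∈ ladderPrefix x δ α) : o ≤ δ := by
  obtain ⟨m, hm, rfl⟩ := List.mem_map.1 h
  exact not_lt.1 (Nat.notMem_of_lt_sInf (List.mem_range.1 hm))

theorem ladderLevel_eq_of_ladderPrefix_eq (h : ladderPrefix x δ α = ladderPrefix x δ β) :
    ladderLevel x δ α = ladderLevel x δ β := by
  simpa [ladderPrefix] using congrArg List.length h

theorem apply_eq_of_ladderPrefix_eq (h : ladderPrefix x δ α = ladderPrefix x δ β) {m : ℕ}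
    (hm : m < ladderLevel x δ α) : x α m = x β m := by
  rw [ladderPrefix, ladderPrefix, ← ladderLevel_eq_of_ladderPrefix_eq h, List.map_inj_left] at h
  exact h m (List.mem_range.2 hm)

theorem IsLadderOn.lexLt_of_ladderPrefix_eq {d : Ordinal} (hx : IsLadderOn S x) (hd : d ∈ S)
    (hdδ : d ≤ δ) (hα : α ∈ S) (hδα : δ < α) (hβ : β ∈ S) (hδβ : δ < β)
    (hp : ladderPrefix x δ α = ladderPrefix x δ β) (h : LexLt x d α) : LexLt x d β :=
  h.of_agree_below (fun m => ((hx d hd).2.2.2.1 m).trans_le hdδ)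
    (hx.lt_apply_ladderLevel hα hδα).le
    (ladderLevel_eq_of_ladderPrefix_eq hp ▸ (hx.lt_apply_ladderLevel hβ hδβ).le)
    (fun _ hm => apply_eq_of_ladderPrefix_eq hp hm)

end ladderPrefix

theorem baumgartner_no_real_type_general (S : Set Ordinal) (x : Ordinal → ℕ → Ordinal)
    (hx : IsLadderOn S x)
    (T : Set Ordinal) (hTS : T ⊆ S)
    (hemb : ∃ g : Ordinal → ℝ, ∀ α ∈ T, ∀ β ∈ T, (LexLt x α β ↔ g α < g β)) :
    T.Countable := by
  obtain ⟨g, hg⟩ := hemb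
  by_contra hT
  obtain ⟨D, hDT, hDc, hD⟩ := exists_countable_subset_image_subset_closure g T
  obtain ⟨δ, hδ, hDδ⟩ := hDc.exists_mem_upperBounds_lt_ω1 fun d hd => (hx d (hTS (hDT hd))).1
  have hTδ : ¬ (T ∩ Ioi δ).Countable := fun h => hT <|
    ((countable_Iic_of_lt_ω1 hδ).union h).mono fun α hα => (le_or_gt α δ).imp id (⟨hα, ·⟩)
  obtain ⟨l, hl⟩ := MapsTo.exists_not_countable_fiber (t := {l | ∀ o ∈ l, o ∈ Iic δ})
    (fun _ _ _ => le_of_mem_ladderPrefix) hTδ (countable_Iic_of_lt_ω1 hδ).setOf_forall_mem_list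
  set F := T ∩ Ioi δ ∩ ladderPrefix x δ ⁻¹' {l}
  have hFT : F ⊆ T := fun α hα => hα.1.1
  have hgF : (g '' F).Infinite :=
    (infinite_image_iff ((hx.injOn_of_lexLt_iff hTS hg).mono hFT)).2 fun h => hl h.countable
  obtain ⟨-, ⟨a, ha, rfl⟩, -, ⟨b, hb, rfl⟩, -, ⟨c, hc, rfl⟩, hab, hbc⟩ := hgF.exists_lt_lt
  obtain ⟨-, ⟨hd, ⟨d, hdD, rfl⟩⟩⟩ :=
    mem_closure_iff_nhds.1 (hD (mem_image_of_mem g (hFT hb))) _ (Ioo_mem_nhds hab hbc)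
  have hdc : LexLt x d c := (hg d (hDT hdD) c (hFT hc)).2 hd.2
  have hda : LexLt x d a := hx.lexLt_of_ladderPrefix_eq (hTS (hDT hdD)) (hDδ hdD)
    (hTS (hFT hc)) hc.1.2 (hTS (hFT ha)) ha.1.2 (hc.2.trans ha.2.symm) hdc
  exact lt_asymm hd.1 ((hg d (hDT hdD) a (hFT ha)).1 hda)

/-- A Baumgartner type contains no real type: any subset of `S` which order-embeds into `ℝ`
(with respect to `<lex`) is countable. -/
theorem baumgartner_no_real_type (S : Set Ordinal) (x : Ordinal → ℕ → Ordinal)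
    (hS : ¬ S.Countable) (hx : IsLadderOn S x)
    (T : Set Ordinal) (hTS : T ⊆ S)
    (hemb : ∃ g : Ordinal → ℝ, ∀ α ∈ T, ∀ β ∈ T, (LexLt x α β ↔ g α < g β)) :
    T.Countable :=
  baumgartner_no_real_type_general S x hx T hTS hemb
end

section
/- Fix a ladder system ⟨x_ξ : ξ ∈ lim(ω₁)⟩ on the set of all countable limit ordinals and let S be a stationary set of countable limit ordinals. Then the set of all r in Cantor space 2^ℕ (with the product topology) such that the linear order (S, <_r) contains both a copy of ω₁ (a strictly <_r-increasing ω₁-sequence) and a copy of −ω₁ (a strictly <_r-decreasing ω₁-sequence) is comeager in 2^ℕ. -/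
/-- `x` is a ladder system on the set of all countable limit ordinals: for each countable
limit ordinal `ξ`, `x ξ : ℕ → Ordinal` is strictly increasing with range contained and
cofinal in `ξ`. -/
def IsLadderSystem (x : Ordinal → ℕ → Ordinal) : Prop :=
  ∀ ξ : Ordinal, ξ < ω1 → Order.IsSuccLimit ξ →
    StrictMono (x ξ) ∧ (∀ n : ℕ, x ξ n < ξ) ∧ ∀ β < ξ, ∃ n : ℕ, β < x ξ n

/-- The linear order `<_r` determined by `r ∈ 2^ℕ`: `ξ <_r η` iff at the least `n` where
`x ξ` and `x η` differ, `x ξ n < x η n` is equivalent to `r n = 0` (here `0` is `false`). -/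
def RLt (x : Ordinal → ℕ → Ordinal) (r : ℕ → Bool) (ξ η : Ordinal) : Prop :=
  ∃ n : ℕ, (∀ m < n, x ξ m = x η m) ∧ x ξ n ≠ x η n ∧ (x ξ n < x η n ↔ r n = false)

/-- `C` is a club subset of `ω₁`: a set of countable ordinals which is unbounded in `ω₁`
and contains the supremum of each of its nonempty bounded subsets. -/
def IsClubIn (C : Set Ordinal) : Prop :=
  C ⊆ Set.Iio ω1 ∧ (∀ β < ω1, ∃ γ ∈ C, β < γ) ∧
    ∀ D ⊆ C, D.Nonempty → (∃ β < ω1, ∀ γ ∈ D, γ ≤ β) → sSup D ∈ C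

/-- `S` is a stationary subset of `ω₁`: it meets every club subset of `ω₁`. -/
def IsStat (S : Set Ordinal) : Prop := ∀ C : Set Ordinal, IsClubIn C → (S ∩ C).Nonempty

/-!
Call a finite sequence `l` a splitting node of `S` if for unboundedly many `γ < ω₁` the set of
`ν ∈ S` whose ladder begins with `l ++ [γ]` is stationary. Picking one such `ν` for each of these
`γ`, in increasing order of `γ`, gives an `ω₁`-sequence in `S` whose ladders agree below
`n = l.length` and increase at `n`; it is `<_r`-increasing if `r n = 0` and `<_r`-decreasing if
`r n = 1`. So it suffices that splitting nodes occur at infinitely many lengths `n`: then a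
comeager set of `r` takes both values on these lengths.

Every stationary `S` has a splitting node. Otherwise each node has only countably many successors
with stationary cone, so the tree of nodes with stationary cone is countable and its entries are
bounded by some `δ < ω₁`. By the pressing-down lemma, only a nonstationary set of members of a
cone leave the tree at the next step; as the tree is countable, some `ν ∈ S` above `δ` never
leaves it, and then its ladder is bounded by `δ < ν`, contradicting cofinality. Pressing down `k`
times gives a node of length `k` with stationary cone, and a splitting node of that cone is
longer than `k`, since below `k` all its members share their ladder values.
-/

open Set Ordinal

universe u v

lemma omega1_eq_omega_one : ω1 = ω₁ := Cardinal.ord_aleph 1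

lemma iSup_lt_omega1 {ι : Type*} [Countable ι] {f : ι → Ordinal} (h : ∀ i, f i < ω1) :
    ⨆ i, f i < ω1 := by
  rw [omega1_eq_omega_one] at h ⊢
  exact Ordinal.iSup_lt_omega_one h

lemma add_one_lt_omega1 {β : Ordinal} (h : β < ω1) : β + 1 < ω1 := by
  rw [omega1_eq_omega_one] at h ⊢
  exact (Cardinal.isSuccLimit_omega 1).add_one_lt h

lemma countable_Iio_of_lt_omega1 {β : Ordinal} (h : β < ω1) : (Iio β).Countable := by
  rw [← Cardinal.le_aleph0_iff_set_countable, Cardinal.mk_Iio_ordinal, Cardinal.lift_le_aleph0,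
    ← Cardinal.lt_aleph_one_iff]
  exact Cardinal.lt_ord.1 h

lemma omega0_lt_omega1 : ω < ω1 := omega1_eq_omega_one ▸ omega0_lt_omega_one

section Clubs

variable {C : Set Ordinal}

lemma isClubIn_Iio_omega1 : IsClubIn (Iio ω1) :=
  ⟨subset_rfl, fun β hβ => ⟨β + 1, add_one_lt_omega1 hβ, Order.lt_add_one_iff.2 le_rfl⟩,
    fun _ _ hne ⟨_, hβ, hD⟩ => (csSup_le hne hD).trans_lt hβ⟩

lemma IsClubIn.inter_Ioi (hC : IsClubIn C) {β : Ordinal} (hβ : β < ω1) :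
    IsClubIn (C ∩ Ioi β) := by
  refine ⟨inter_subset_left.trans hC.1, fun γ hγ => ?_, ?_⟩
  · obtain ⟨c, hcC, hc⟩ := hC.2.1 _ (max_lt hβ hγ)
    exact ⟨c, ⟨hcC, (le_max_left _ _).trans_lt hc⟩, (le_max_right _ _).trans_lt hc⟩
  · rintro D hD ⟨d, hd⟩ ⟨δ, hδω, hδ⟩
    exact ⟨hC.2.2 D (hD.trans inter_subset_left) ⟨d, hd⟩ ⟨δ, hδω, hδ⟩,
      mem_Ioi.2 ((hD hd).2.trans_le (le_csSup ⟨δ, hδ⟩ hd))⟩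

lemma IsClubIn.mem_of_forall_lt (hC : IsClubIn C) {ν : Ordinal} (hν : ν < ω1) (hpos : 0 < ν)
    (h : ∀ α < ν, ∃ e ∈ C, α < e ∧ e ≤ ν) : ν ∈ C := by
  have hne : (C ∩ Iic ν).Nonempty := by
    obtain ⟨e, he, -, heν⟩ := h 0 hpos
    exact ⟨e, he, heν⟩
  have hsup : sSup (C ∩ Iic ν) = ν := by
    refine le_antisymm (csSup_le hne fun _ he => he.2) (le_of_not_gt fun hlt => ?_)
    obtain ⟨e, he, hlte, heν⟩ := h _ hlt
    exact (le_csSup (s := C ∩ Iic ν) ⟨ν, fun _ he => he.2⟩ ⟨he, heν⟩).not_gt hlte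
  rw [← hsup]
  exact hC.2.2 _ inter_subset_left hne ⟨ν, hν, fun _ he => he.2⟩

end Clubs

section DiagonalIntersection

def diagInter (C : Ordinal → Set Ordinal) : Set Ordinal := {ν | ν < ω1 ∧ ∀ γ < ν, ν ∈ C γ}

variable {C : Ordinal → Set Ordinal}

lemma exists_mem_diagInter_gt (hC : ∀ γ < ω1, IsClubIn (C γ)) {β : Ordinal} (hβ : β < ω1) :
    ∃ ν ∈ diagInter C, β < ν := by
  have step : ∀ b < ω1, ∃ b' < ω1, b < b' ∧ ∀ γ < b, ∃ e ∈ C γ, b < e ∧ e ≤ b' := by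
    intro b hb
    have : ∀ γ : Iio b, ∃ e ∈ C γ, b < e := fun γ => (hC γ (γ.2.trans hb)).2.1 b hb
    choose e he hbe using this
    have : Countable (Iio b) := (countable_Iio_of_lt_omega1 hb).to_subtype
    refine ⟨max (b + 1) (⨆ γ, e γ), max_lt (add_one_lt_omega1 hb)
      (iSup_lt_omega1 fun γ => (hC γ (γ.2.trans hb)).1 (he γ)),
      (Order.lt_add_one_iff.2 le_rfl).trans_le (le_max_left _ _), fun γ hγ => ?_⟩
    exact ⟨e ⟨γ, hγ⟩, he ⟨γ, hγ⟩, hbe _, (Ordinal.le_iSup e _).trans (le_max_right _ _)⟩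
  choose! F hF using step
  set s : ℕ → Ordinal := fun k => F^[k] (β + 1)
  have hs_succ : ∀ k, s (k + 1) = F (s k) := fun k => Function.iterate_succ_apply' F k _
  have hs : ∀ k, s k < ω1 := by
    intro k
    induction k with
    | zero => exact add_one_lt_omega1 hβ
    | succ k ih => rw [hs_succ]; exact (hF _ ih).1
  have hmono : Monotone s :=
    monotone_nat_of_le_succ fun k => by rw [hs_succ]; exact (hF _ (hs k)).2.1.le
  have hν : ⨆ k, s k < ω1 := iSup_lt_omega1 hs
  have hβν : β < ⨆ k, s k := (Order.lt_add_one_iff.2 le_rfl).trans_le (Ordinal.le_iSup s 0)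
  refine ⟨⨆ k, s k, ⟨hν, fun γ hγ => ?_⟩, hβν⟩
  refine (hC γ (hγ.trans hν)).mem_of_forall_lt hν (pos_of_gt hβν) fun α hα => ?_
  obtain ⟨j, hj⟩ := Ordinal.lt_iSup_iff.1 hα
  obtain ⟨k, hk⟩ := Ordinal.lt_iSup_iff.1 hγ
  obtain ⟨e, he, hlt, hle⟩ :=
    (hF _ (hs (max j k))).2.2 γ (hk.trans_le (hmono (le_max_right j k)))
  refine ⟨e, he, (hj.trans_le (hmono (le_max_left j k))).trans hlt, ?_⟩
  rw [← hs_succ] at hle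
  exact hle.trans (Ordinal.le_iSup s _)

lemma isClubIn_diagInter (hC : ∀ γ < ω1, IsClubIn (C γ)) : IsClubIn (diagInter C) := by
  refine ⟨fun _ h => h.1, fun β hβ => exists_mem_diagInter_gt hC hβ, ?_⟩
  rintro D hD hne ⟨β, hβ, hDβ⟩
  have hσ : sSup D < ω1 := (csSup_le hne hDβ).trans_lt hβ
  refine ⟨hσ, fun γ hγ => ?_⟩
  refine (hC γ (hγ.trans hσ)).mem_of_forall_lt hσ (pos_of_gt hγ) fun α hα => ?_
  obtain ⟨d, hdD, hd⟩ := exists_lt_of_lt_csSup hne (max_lt hα hγ)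
  exact ⟨d, (hD hdD).2 γ ((le_max_right _ _).trans_lt hd), (le_max_left _ _).trans_lt hd,
    le_csSup ⟨β, hDβ⟩ hdD⟩

end DiagonalIntersection

section Stationary

variable {S : Set Ordinal}

lemma IsStat.mono {T : Set Ordinal} (hS : IsStat S) (hST : S ⊆ T) : IsStat T := fun C hC =>
  (hS C hC).mono (inter_subset_inter_left _ hST)

lemma IsStat.nonempty (hS : IsStat S) : S.Nonempty :=
  (hS _ isClubIn_Iio_omega1).mono inter_subset_left

lemma IsStat.exists_lt_omega1 (hS : IsStat S) : ∃ ν ∈ S, ν < ω1 := hS _ isClubIn_Iio_omega1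

lemma IsStat.inter_Ioi (hS : IsStat S) {δ : Ordinal} (hδ : δ < ω1) : IsStat (S ∩ Ioi δ) :=
  fun C hC => by
    obtain ⟨ν, hνS, hνC, hδν⟩ := hS _ (hC.inter_Ioi hδ)
    exact ⟨ν, ⟨hνS, hδν⟩, hνC⟩

lemma not_isStat_iff {A : Set Ordinal} : ¬ IsStat A ↔ ∃ C, IsClubIn C ∧ Disjoint A C := by
  simp [IsStat, Set.not_nonempty_iff_eq_empty, Set.disjoint_iff_inter_eq_empty]

lemma IsStat.exists_isStat_of_iUnion {ι : Type*} [Countable ι] {A : ι → Set Ordinal}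
    (h : IsStat (⋃ i, A i)) : ∃ i, IsStat (A i) := by
  by_contra! hns
  simp only [not_isStat_iff] at hns
  choose C hC hAC using hns
  cases isEmpty_or_nonempty ι
  · simpa using h.exists_lt_omega1
  obtain ⟨e, he⟩ := exists_surjective_nat ι
  -- `D` is club-valued and agrees with `k ↦ C (e k)` at every natural number `k`
  let D : Ordinal → Set Ordinal := fun γ => C (e (Function.invFun ((↑) : ℕ → Ordinal) γ))
  obtain ⟨ν, hνA, hνD, hων : ω < ν⟩ :=
    h _ ((isClubIn_diagInter (C := D) fun γ _ => hC _).inter_Ioi omega0_lt_omega1)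
  obtain ⟨i, hi⟩ := mem_iUnion.1 hνA
  obtain ⟨k, rfl⟩ := he i
  have hνC := hνD.2 k ((natCast_lt_omega0 k).trans hων)
  simp only [D, Function.leftInverse_invFun Nat.cast_injective k] at hνC
  exact (hAC _).ne_of_mem hi hνC rfl

/-- Fodor's pressing-down lemma. -/
lemma IsStat.exists_isStat_fiber (hS : IsStat S) {g : Ordinal → Ordinal}
    (hg : ∀ ν ∈ S, g ν < ν) : ∃ γ, IsStat {ν ∈ S | g ν = γ} := by
  by_contra! hns
  simp only [not_isStat_iff] at hns
  choose C hC hSC using hns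
  obtain ⟨ν, hνS, hνC⟩ := hS _ (isClubIn_diagInter fun γ _ => hC γ)
  exact (hSC (g ν)).ne_of_mem ⟨hνS, rfl⟩ (hνC.2 _ (hg ν hνS)) rfl

end Stationary

/-- Like `Ordinal.enumOrd`, but the index may live in another universe than `B`, as the
`ω₁`-sequences of the main theorem do. -/
noncomputable def increasingEnum (B : Set Ordinal.{u}) (ξ : Ordinal.{v}) : Ordinal.{u} :=
  sInf {γ ∈ B | ∀ η < ξ, increasingEnum B η < γ}
termination_by ξ

lemma increasingEnum_spec {B : Set Ordinal.{u}} (hB : B ⊆ Iio ω1)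
    (hunb : ∀ β < ω1, ∃ γ ∈ B, β < γ) {ξ : Ordinal.{v}} (hξ : ξ < ω1) :
    increasingEnum B ξ ∈ B ∧ ∀ η < ξ, increasingEnum B η < increasingEnum B ξ := by
  induction ξ using WellFoundedLT.induction with
  | _ ξ IH =>
    have : Countable (Iio ξ) := (countable_Iio_of_lt_omega1 hξ).to_subtype
    obtain ⟨γ, hγB, hγ⟩ := hunb (⨆ η : Iio ξ, increasingEnum B η.1)
      (iSup_lt_omega1 fun η => hB (IH η η.2 (η.2.trans hξ)).1)
    have hne : {γ ∈ B | ∀ η < ξ, increasingEnum B η < γ}.Nonempty :=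
      ⟨γ, hγB, fun η hη =>
        (Ordinal.le_iSup (fun η : Iio ξ => increasingEnum B η.1) ⟨η, hη⟩).trans_lt hγ⟩
    rw [increasingEnum]
    exact csInf_mem hne

lemma Set.Countable.of_countable_children {α : Type*} {T : Set (List α)}
    (hT : ∀ l a, l ++ [a] ∈ T → l ∈ T) (hc : ∀ l ∈ T, {a | l ++ [a] ∈ T}.Countable) :
    T.Countable := by
  have hlevel : ∀ n, {l ∈ T | l.length = n}.Countable := by
    intro n
    induction n with
    | zero => exact (countable_singleton []).mono fun l hl => List.length_eq_zero_iff.1 hl.2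
    | succ n ih =>
      refine (ih.biUnion fun l hl => (hc l hl.1).image fun a => l ++ [a]).mono ?_
      rintro l' ⟨hl'T, hlen⟩
      rcases List.eq_nil_or_concat l' with rfl | ⟨l, a, rfl⟩
      · simp at hlen
      · rw [List.concat_eq_append] at hl'T hlen ⊢
        have hl : l ∈ {l ∈ T | l.length = n} := ⟨hT l a hl'T, by simpa using hlen⟩
        exact mem_biUnion hl ⟨a, hl'T, rfl⟩
  refine (countable_iUnion hlevel).mono fun l hl => ?_
  exact mem_iUnion.2 ⟨l.length, hl, rfl⟩

section LadderCones

variable {x : Ordinal.{u} → ℕ → Ordinal.{u}} {S : Set Ordinal.{u}} {l : List Ordinal.{u}}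
  {ν γ : Ordinal.{u}}

def ladderCone (x : Ordinal → ℕ → Ordinal) (S : Set Ordinal) (l : List Ordinal) : Set Ordinal :=
  {ν ∈ S | (List.range l.length).map (x ν) = l}

@[simp]
lemma ladderCone_nil : ladderCone x S [] = S := by
  simp [ladderCone]

lemma mem_ladderCone_range {k : ℕ} : ν ∈ ladderCone x S ((List.range k).map (x ν)) ↔ ν ∈ S := by
  simp [ladderCone]

lemma mem_ladderCone_append_singleton :
    ν ∈ ladderCone x S (l ++ [γ]) ↔ ν ∈ ladderCone x S l ∧ x ν l.length = γ := by
  simp only [ladderCone, mem_ofPred_eq, List.length_append, List.length_singleton, List.range_succ,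
    List.map_append, List.map_singleton, List.singleton_inj, and_assoc,
    List.append_eq_append_iff_of_size_eq_left (List.length_map _ ▸ List.length_range)]

lemma ladderCone_append_singleton_subset : ladderCone x S (l ++ [γ]) ⊆ ladderCone x S l :=
  fun _ h => (mem_ladderCone_append_singleton.1 h).1

lemma ladderCone_mono {T : Set Ordinal} (hST : S ⊆ T) : ladderCone x S l ⊆ ladderCone x T l :=
  fun _ h => ⟨hST h.1, h.2⟩

lemma getD_eq_of_mem_ladderCone (hν : ν ∈ ladderCone x S l) {i : ℕ} (hi : i < l.length) :
    l.getD i 0 = x ν i := by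
  rw [← hν.2]
  simp [hi]

lemma getD_lt_of_mem_ladderCone (hreg : ∀ ν ∈ S, ∀ n, x ν n < ν) (hν : ν ∈ ladderCone x S l)
    (i : ℕ) : l.getD i 0 < ν := by
  rcases lt_or_ge i l.length with hi | hi
  · rw [getD_eq_of_mem_ladderCone hν hi]
    exact hreg ν hν.1 i
  · rw [List.getD_eq_default _ _ hi]
    exact zero_le.trans_lt (hreg ν hν.1 0)

def IsSplittingNode (x : Ordinal → ℕ → Ordinal) (S : Set Ordinal) (l : List Ordinal) : Prop :=
  ∀ β < ω1, ∃ γ, β < γ ∧ IsStat (ladderCone x S (l ++ [γ]))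

lemma IsSplittingNode.mono {T : Set Ordinal} (hl : IsSplittingNode x S l) (hST : S ⊆ T) :
    IsSplittingNode x T l := fun β hβ => by
  obtain ⟨γ, hβγ, hγ⟩ := hl β hβ
  exact ⟨γ, hβγ, hγ.mono (ladderCone_mono hST)⟩

def fallOff (x : Ordinal → ℕ → Ordinal) (S : Set Ordinal) (l : List Ordinal) : Set Ordinal :=
  {ν ∈ ladderCone x S l | ¬ IsStat (ladderCone x S (l ++ [x ν l.length]))}

lemma not_isStat_fallOff (hreg : ∀ ν ∈ S, ∀ n, x ν n < ν) (l : List Ordinal) :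
    ¬ IsStat (fallOff x S l) := by
  intro hE
  obtain ⟨γ, hγ⟩ :=
    hE.exists_isStat_fiber (g := fun ν => x ν l.length) fun ν hν => hreg ν hν.1.1 _
  obtain ⟨ν, ⟨-, hν⟩, rfl⟩ := hγ.nonempty
  exact hν (hγ.mono fun μ ⟨⟨hμ, _⟩, hμγ⟩ => mem_ladderCone_append_singleton.2 ⟨hμ, hμγ⟩)

lemma isStat_ladderCone_range (hS : IsStat S) (hν : ν ∈ S)
    (hfall : ∀ k, IsStat (ladderCone x S ((List.range k).map (x ν))) →
      ν ∉ fallOff x S ((List.range k).map (x ν))) (k : ℕ) :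
    IsStat (ladderCone x S ((List.range k).map (x ν))) := by
  induction k with
  | zero => simpa using hS
  | succ k ih =>
    have := hfall k ih
    simp only [fallOff, mem_ofPred_eq, mem_ladderCone_range, List.length_map, not_and,
      not_not] at this
    simpa [List.range_succ] using this hν

lemma exists_isSplittingNode (hS : IsStat S) (hreg : ∀ ν ∈ S, ∀ n, x ν n < ν)
    (hcof : ∀ ν ∈ S, ∀ β < ν, ∃ n, β < x ν n) : ∃ l, IsSplittingNode x S l := by
  by_contra! hns
  simp only [IsSplittingNode, not_forall, not_exists, not_and] at hns
  choose b hb hbγ using hns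
  set T := {l | IsStat (ladderCone x S l)}
  have hT : T.Countable := by
    refine .of_countable_children (fun l a h => h.mono ladderCone_append_singleton_subset)
      fun l _ => (countable_Iio_of_lt_omega1 (add_one_lt_omega1 (hb l))).mono fun γ hγ => ?_
    exact Order.lt_add_one_iff.2 (le_of_not_gt fun h => hbγ l γ h hγ)
  have : Countable T := hT.to_subtype
  set δ := ⨆ p : T × ℕ, p.1.1.getD p.2 0
  have hδ : δ < ω1 := iSup_lt_omega1 fun p => by
    obtain ⟨ν, hν, hνω⟩ := p.1.2.exists_lt_omega1
    exact (getD_lt_of_mem_ladderCone hreg hν _).trans hνω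
  suffices hsub : S ∩ Ioi δ ⊆ ⋃ l : T, fallOff x S l by
    obtain ⟨l, hl⟩ := ((hS.inter_Ioi hδ).mono hsub).exists_isStat_of_iUnion
    exact not_isStat_fallOff hreg _ hl
  rintro ν ⟨hνS, hδν⟩
  by_contra! hν
  simp only [mem_iUnion, not_exists] at hν
  have hpre := isStat_ladderCone_range hS hνS fun k hk => hν ⟨_, hk⟩
  obtain ⟨n, hn⟩ := hcof ν hνS δ hδν
  have : x ν n ≤ δ := by
    convert Ordinal.le_iSup (fun p : T × ℕ => p.1.1.getD p.2 0) (⟨_, hpre (n + 1)⟩, n)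
    simp
  exact this.not_gt hn

lemma exists_isStat_ladderCone (hS : IsStat S) (hreg : ∀ ν ∈ S, ∀ n, x ν n < ν) (k : ℕ) :
    ∃ l : List Ordinal, l.length = k ∧ IsStat (ladderCone x S l) := by
  induction k with
  | zero => exact ⟨[], rfl, by simpa using hS⟩
  | succ k ih =>
    obtain ⟨l, rfl, hl⟩ := ih
    obtain ⟨γ, hγ⟩ :=
      hl.exists_isStat_fiber (g := fun ν => x ν l.length) fun ν hν => hreg ν hν.1 _
    exact ⟨l ++ [γ], by simp, hγ.mono fun ν hν => mem_ladderCone_append_singleton.2 hν⟩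

lemma exists_isSplittingNode_length_ge (hS : IsStat S) (hreg : ∀ ν ∈ S, ∀ n, x ν n < ν)
    (hcof : ∀ ν ∈ S, ∀ β < ν, ∃ n, β < x ν n) (k : ℕ) :
    ∃ l : List Ordinal, k ≤ l.length ∧ IsSplittingNode x S l := by
  obtain ⟨l₀, rfl, hl₀⟩ := exists_isStat_ladderCone hS hreg k
  have hsub : ladderCone x S l₀ ⊆ S := fun ν hν => hν.1
  obtain ⟨l, hl⟩ := exists_isSplittingNode hl₀ (fun ν hν => hreg ν (hsub hν))
    (fun ν hν => hcof ν (hsub hν))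
  refine ⟨l, le_of_not_gt fun hlt => ?_, hl.mono hsub⟩
  -- members of the cone of `l₀` share their ladder values below `l₀.length`
  have hsucc : ∀ γ, IsStat (ladderCone x (ladderCone x S l₀) (l ++ [γ])) →
      γ = l₀.getD l.length 0 ∧ γ < ω1 := by
    intro γ hγ
    obtain ⟨ν, hν, hνω⟩ := hγ.exists_lt_omega1
    obtain ⟨⟨hν₀, -⟩, rfl⟩ := mem_ladderCone_append_singleton.1 hν
    exact ⟨(getD_eq_of_mem_ladderCone hν₀ hlt).symm, (hreg ν hν₀.1 _).trans hνω⟩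
  obtain ⟨γ₁, -, h₁⟩ := hl 0 (omega0_pos.trans omega0_lt_omega1)
  obtain ⟨γ₂, hγ, h₂⟩ := hl γ₁ (hsucc γ₁ h₁).2
  exact hγ.ne ((hsucc γ₁ h₁).1.trans (hsucc γ₂ h₂).1.symm)

lemma IsSplittingNode.exists_chain (hl : IsSplittingNode x S l)
    (hreg : ∀ ν ∈ S, ∀ n, x ν n < ν) :
    ∃ f : Ordinal.{v} → Ordinal.{u}, (∀ ξ < ω1, f ξ ∈ S) ∧ ∀ ξ η, ξ < ω1 → η < ω1 → ξ < η →
      (∀ m < l.length, x (f ξ) m = x (f η) m) ∧ x (f ξ) l.length < x (f η) l.length := by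
  set B := {γ | IsStat (ladderCone x S (l ++ [γ]))}
  have hB : B ⊆ Iio ω1 := fun γ hγ => by
    obtain ⟨ν, hν, hνω⟩ := IsStat.exists_lt_omega1 hγ
    obtain ⟨hν, rfl⟩ := mem_ladderCone_append_singleton.1 hν
    exact (hreg ν hν.1 _).trans hνω
  have hunb : ∀ β < ω1, ∃ γ ∈ B, β < γ := fun β hβ => by
    obtain ⟨γ, hβγ, hγ⟩ := hl β hβ
    exact ⟨γ, hγ, hβγ⟩
  choose! w hw using fun γ (hγ : γ ∈ B) => IsStat.nonempty hγ
  have hwf : ∀ ξ : Ordinal.{v}, ξ < ω1 → w (increasingEnum B ξ) ∈ ladderCone x S l ∧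
      x (w (increasingEnum B ξ)) l.length = increasingEnum B ξ := fun ξ hξ =>
    mem_ladderCone_append_singleton.1 (hw _ (increasingEnum_spec hB hunb hξ).1)
  refine ⟨fun ξ => w (increasingEnum B ξ), fun ξ hξ => (hwf ξ hξ).1.1,
    fun ξ η hξ hη hξη => ⟨fun m hm => ?_, ?_⟩⟩
  · rw [← getD_eq_of_mem_ladderCone (hwf ξ hξ).1 hm,
      ← getD_eq_of_mem_ladderCone (hwf η hη).1 hm]
  · rw [(hwf ξ hξ).2, (hwf η hη).2]
    exact (increasingEnum_spec hB hunb hη).2 ξ hξη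

open Filter Topology in
lemma residual_setOf_exists_apply_eq {α : Type*} [TopologicalSpace α] [DiscreteTopology α]
    {P : ℕ → Prop} (hP : ∃ᶠ n in atTop, P n) (b : α) :
    {r : ℕ → α | ∃ n, P n ∧ r n = b} ∈ residual (ℕ → α) := by
  refine residual_of_dense_open ?_ fun r₀ => ?_
  · simp only [ofPred_exists, ofPred_and]
    refine isOpen_iUnion fun n => isOpen_const.inter ?_
    exact (isOpen_discrete {b}).preimage (continuous_apply (A := fun _ : ℕ => α) n)
  · choose n hn hPn using frequently_atTop.1 hP
    refine mem_closure_of_tendsto (f := fun k => Function.update r₀ (n k) b) (b := atTop) ?_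
      (Eventually.of_forall fun k => ⟨_, hPn k, Function.update_self _ _ _⟩)
    refine tendsto_pi_nhds.2 fun i => tendsto_const_nhds.congr' ?_
    filter_upwards [eventually_gt_atTop i] with k hk
    exact (Function.update_of_ne (by have := hn k; omega) _ _).symm

/-- For a stationary set `S` of countable limit ordinals, the set of `r` in Cantor space for
which `(S, <_r)` contains both a strictly increasing and a strictly decreasing `ω₁`-sequence
is comeager. -/
theorem comeager_copies_of_omega1_and_reverse (x : Ordinal → ℕ → Ordinal)
    (hx : IsLadderSystem x) (S : Set Ordinal)
    (hSsub : ∀ α ∈ S, α < ω1 ∧ Order.IsSuccLimit α) (hstat : IsStat S) :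
    {r : ℕ → Bool |
        (∃ f : Ordinal → Ordinal, (∀ ξ < ω1, f ξ ∈ S) ∧
          ∀ ξ η : Ordinal, ξ < ω1 → η < ω1 → ξ < η → RLt x r (f ξ) (f η)) ∧
        (∃ f : Ordinal → Ordinal, (∀ ξ < ω1, f ξ ∈ S) ∧
          ∀ ξ η : Ordinal, ξ < ω1 → η < ω1 → ξ < η → RLt x r (f η) (f ξ))} ∈
      residual (ℕ → Bool) := by
  have hladder := fun ν (hν : ν ∈ S) => hx ν (hSsub ν hν).1 (hSsub ν hν).2
  have hreg : ∀ ν ∈ S, ∀ n, x ν n < ν := fun ν hν => (hladder ν hν).2.1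
  have hlevels : ∃ᶠ n in Filter.atTop, ∃ l : List Ordinal, l.length = n ∧ IsSplittingNode x S l :=
    Filter.frequently_atTop.2 fun k => by
      obtain ⟨l, hk, hl⟩ :=
        exists_isSplittingNode_length_ge hstat hreg (fun ν hν => (hladder ν hν).2.2) k
      exact ⟨l.length, hk, l, rfl, hl⟩
  filter_upwards [residual_setOf_exists_apply_eq hlevels false,
    residual_setOf_exists_apply_eq hlevels true]
    with r ⟨_, ⟨l, rfl, hl⟩, hr⟩ ⟨_, ⟨l', rfl, hl'⟩, hr'⟩
  obtain ⟨f, hfS, hf⟩ := hl.exists_chain hreg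
  obtain ⟨f', hf'S, hf'⟩ := hl'.exists_chain hreg
  refine ⟨⟨f, hfS, fun ξ η hξ hη hξη => ?_⟩, ⟨f', hf'S, fun ξ η hξ hη hξη => ?_⟩⟩
  · obtain ⟨hagree, hlt⟩ := hf ξ η hξ hη hξη
    exact ⟨l.length, hagree, hlt.ne, iff_of_true hlt hr⟩
  · obtain ⟨hagree, hlt⟩ := hf' ξ η hξ hη hξη
    exact ⟨l'.length, fun m hm => (hagree m hm).symm, hlt.ne',
      iff_of_false hlt.asymm (by simp [hr'])⟩
end LadderCones
end
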